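/- On the four-point filtered space with Ω = {1,2,3,4}, F_0 trivial, F_1 = σ({1,2},{3,4}), F_2 = 2^Ω, P = (1/100, 9/100, 9/100, 81/100), λ = 1/50, and V = (v⁰, v¹) with v⁰ ≡ 1 and v¹ = 3·1_{{1}} + 1_{{2,3,4}}, the dual cone A_0* of the time-0 AVaR acceptance set A_0 = {X : sup_{Q∈Q_λ} E_Q[X] ≤ 0} is V-m-stable: for every stopping time τ ≤ 2 and every Z, W ∈ A_0*·V = {Z̃ V : Z̃ ∈ A_0*} with E[Z|F_τ] = α E[W|F_τ] (componentwise) for some F_τ-measurable α ≥ 0, one has αW ∈ A_0*·V. -/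

import Mathlib

/-!
Statement 18: on the four-point space `Ω = {1,2,3,4}` (represented by `Fin 4`, point `i+1`
represented by `i`) with `F_0` trivial, `F_1 = σ({1,2},{3,4})`, `F_2 = 2^Ω`,
`P = (1/100, 9/100, 9/100, 81/100)`, `λ = 1/50`, and `V = (v⁰, v¹)` with `v⁰ ≡ 1` and
`v¹ = 3·1_{{1}} + 1_{{2,3,4}}`, the dual cone `A_0*` of the time-0 AVaR acceptance set is
`V`-m-stable: `A_0*·V` is predictably m-stable.
`ℝ²`-valued random vectors are represented componentwise as `W : Fin 2 → Fin 4 → ℝ`, and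
conditional expectations are taken componentwise. -/

open MeasureTheory Finset

/-- `F_1 = σ({1,2})` (the σ-algebra generated by the time-1 atoms). -/
def F1m : MeasurableSpace (Fin 4) := MeasurableSpace.generateFrom {({0,1} : Set (Fin 4))}

/-- The filtration `F_0 = {∅,Ω}`, `F_1 = σ({1,2},{3,4})`, `F_t = 2^Ω` for `t ≥ 2`. -/
def ℱ4 : Filtration ℕ (inferInstance : MeasurableSpace (Fin 4)) where
  seq t := if t = 0 then ⊥ else if t = 1 then F1m else ⊤
  mono' := by
    intro i j hij
    dsimp only
    split_ifs <;> first | exact bot_le | exact le_top | exact le_rfl | omega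
  le' t := by
    try dsimp only
    split_ifs <;> first | exact bot_le | exact le_top

/-- The objective measure `P` with masses `(1/100, 9/100, 9/100, 81/100)`. -/
noncomputable def μ4 : Measure (Fin 4) :=
  (1/100 : ENNReal) • Measure.dirac 0 + (9/100 : ENNReal) • Measure.dirac 1 +
    (9/100 : ENNReal) • Measure.dirac 2 + (81/100 : ENNReal) • Measure.dirac 3

/-- The reference probabilities. -/
noncomputable def pRef : Fin 4 → ℝ := ![1/100, 9/100, 9/100, 81/100]

/-- The representing set `Q_λ`, `λ = 1/50`: densities bounded by `1/λ = 50`,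
identified with the quadruples of their masses. -/
def Qlam : Set (Fin 4 → ℝ) :=
  {q | (∀ i, 0 ≤ q i) ∧ (∑ i, q i) = 1 ∧ ∀ i, q i ≤ 50 * pRef i}

/-- The acceptance set `A_0 = {X : AVaR_0(X) = sup_{Q∈Q_λ} E_Q[X] ≤ 0}`. -/
noncomputable def A0 : Set (Fin 4 → ℝ) :=
  {X | sSup ((fun q => ∑ i, q i * X i) '' Qlam) ≤ 0}

/-- The dual cone `A_0* = {Z ∈ L¹ : E[ZX] ≤ 0 for all X ∈ A_0}`. -/
noncomputable def A0star : Set (Fin 4 → ℝ) :=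
  {Z | ∀ X ∈ A0, ∑ i, pRef i * (Z i * X i) ≤ 0}

/-- The numéraires `V = (v⁰, v¹)`, `v⁰ ≡ 1`, `v¹ = 3·1_{{1}} + 1_{{2,3,4}}`. -/
noncomputable def V4 : Fin 2 → Fin 4 → ℝ :=
  ![fun _ => 1, fun i => if i = 0 then 3 else 1]

/-- `A_0*·V = {Z̃V : Z̃ ∈ A_0*}`, as `ℝ²`-valued random vectors. -/
noncomputable def A0starV : Set (Fin 2 → Fin 4 → ℝ) :=
  {W | ∃ Z ∈ A0star, ∀ k i, W k i = Z i * V4 k i}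

lemma fin4_cases (i : Fin 4) : i = 0 ∨ i = 1 ∨ i = 2 ∨ i = 3 := by omega

lemma mem_Qlam_iff (q : Fin 4 → ℝ) : q ∈ Qlam ↔ (∀ i, 0 ≤ q i) ∧
    (q 0 + q 1 + q 2 + q 3) = 1 ∧ q 0 ≤ 1/2 ∧ q 1 ≤ 9/2 ∧ q 2 ≤ 9/2 ∧ q 3 ≤ 81/2 := by
  have p0 : (50:ℝ) * pRef 0 = 1/2 := by norm_num [pRef]
  have p1 : (50:ℝ) * pRef 1 = 9/2 := by norm_num [pRef]
  have p2 : (50:ℝ) * pRef 2 = 9/2 := by norm_num [pRef, Matrix.cons_val_two, Matrix.cons_val_three]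
  have p3 : (50:ℝ) * pRef 3 = 81/2 := by norm_num [pRef, Matrix.cons_val_two, Matrix.cons_val_three]
  constructor
  · rintro ⟨h0, h1, h2⟩
    rw [Fin.sum_univ_four] at h1
    exact ⟨h0, h1, p0 ▸ h2 0, p1 ▸ h2 1, p2 ▸ h2 2, p3 ▸ h2 3⟩
  · rintro ⟨h0, h1, h2, h3, h4, h5⟩
    refine ⟨h0, by rw [Fin.sum_univ_four]; exact h1, ?_⟩
    intro i
    rcases fin4_cases i with h | h | h | h <;> subst h
    · exact p0 ▸ h2
    · exact p1 ▸ h3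
    · exact p2 ▸ h4
    · exact p3 ▸ h5

lemma mem_A0_of (X : Fin 4 → ℝ)
    (h : ∀ q ∈ Qlam, q 0 * X 0 + q 1 * X 1 + q 2 * X 2 + q 3 * X 3 ≤ 0) : X ∈ A0 := by
  refine Real.sSup_nonpos ?_
  rintro x ⟨q, hq, rfl⟩
  dsimp only
  rw [Fin.sum_univ_four]
  exact h q hq

lemma mem_A0_elim {X : Fin 4 → ℝ} (hX : X ∈ A0) {q : Fin 4 → ℝ} (hq : q ∈ Qlam) :
    q 0 * X 0 + q 1 * X 1 + q 2 * X 2 + q 3 * X 3 ≤ 0 := by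
  have hb : BddAbove ((fun q => ∑ i, q i * X i) '' Qlam) := by
    refine ⟨∑ i, 50 * pRef i * |X i|, ?_⟩
    rintro x ⟨r, hr, rfl⟩
    refine Finset.sum_le_sum fun i _ => ?_
    calc r i * X i ≤ r i * |X i| := mul_le_mul_of_nonneg_left (le_abs_self _) (hr.1 i)
      _ ≤ 50 * pRef i * |X i| := mul_le_mul_of_nonneg_right (hr.2.2 i) (abs_nonneg _)
  have h := (le_csSup hb ⟨q, hq, rfl⟩).trans hX
  dsimp only at h
  rwa [Fin.sum_univ_four] at h

lemma mem_A0star_iff (Z : Fin 4 → ℝ) : Z ∈ A0star ↔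
    (∀ i, 0 ≤ Z i) ∧ Z 0 ≤ 9 * Z 1 + 9 * Z 2 + 81 * Z 3 := by
  have hsum : ∀ W X : Fin 4 → ℝ, (∑ i, pRef i * (W i * X i)) =
      W 0 * X 0 / 100 + 9 * (W 1 * X 1) / 100 + 9 * (W 2 * X 2) / 100
        + 81 * (W 3 * X 3) / 100 := by
    intro W X
    rw [Fin.sum_univ_four]
    norm_num [pRef, Matrix.cons_val_two, Matrix.cons_val_three]
    ring
  constructor
  · intro hZ
    have key : ∀ X ∈ A0, Z 0 * X 0 / 100 + 9 * (Z 1 * X 1) / 100 + 9 * (Z 2 * X 2) / 100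
        + 81 * (Z 3 * X 3) / 100 ≤ 0 := by
      intro X hX
      have := hZ X hX
      rwa [hsum] at this
    have hq3 : (fun i : Fin 4 => if i = 3 then (1:ℝ) else 0) ∈ Qlam := by
      rw [mem_Qlam_iff]
      refine ⟨fun i => by split <;> norm_num, by simp; norm_num⟩
    have hq01 : (fun i : Fin 4 => if i = 0 ∨ i = 1 then (1/2:ℝ) else 0) ∈ Qlam := by
      rw [mem_Qlam_iff]
      refine ⟨fun i => by split <;> norm_num, by simp; norm_num⟩
    -- nonnegativity, coordinate by coordinate
    have hmem : ∀ j : Fin 4, (fun i : Fin 4 => if i = j then (-1:ℝ) else 0) ∈ A0 := by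
      intro j
      refine mem_A0_of _ fun r hr => ?_
      have h0 := hr.1 0; have h1 := hr.1 1; have h2 := hr.1 2; have h3 := hr.1 3
      rcases fin4_cases j with h | h | h | h <;> subst h <;> simp <;> nlinarith
    have hz0 : 0 ≤ Z 0 := by have h := key _ (hmem 0); simp at h; linarith
    have hz1 : 0 ≤ Z 1 := by have h := key _ (hmem 1); simp at h; linarith
    have hz2 : 0 ≤ Z 2 := by have h := key _ (hmem 2); simp at h; linarith
    have hz3 : 0 ≤ Z 3 := by have h := key _ (hmem 3); simp at h; linarith
    refine ⟨fun i => by rcases fin4_cases i with h | h | h | h <;> subst h <;> assumption, ?_⟩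
    have hX : (fun i : Fin 4 => if i = 0 then (1:ℝ) else -1) ∈ A0 := by
      refine mem_A0_of _ fun q hq => ?_
      rw [mem_Qlam_iff] at hq
      obtain ⟨hge, hs, hb0, -⟩ := hq
      simp
      linarith
    have h := key _ hX
    simp at h
    linarith
  · rintro ⟨h0, h1⟩ X hX
    rw [hsum]
    obtain ⟨c, hc⟩ : ∃ c : ℝ, c = Z 0 / 100 + 9 * Z 1 / 100 + 9 * Z 2 / 100 + 81 * Z 3 / 100 :=
      ⟨_, rfl⟩
    have e0 := h0 0; have e1 := h0 1; have e2 := h0 2; have e3 := h0 3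
    have hcnn : 0 ≤ c := by linarith
    rcases eq_or_lt_of_le hcnn with hc0 | hcpos
    · have hz0 : Z 0 = 0 := by linarith
      have hz1 : Z 1 = 0 := by linarith
      have hz2 : Z 2 = 0 := by linarith
      have hz3 : Z 3 = 0 := by linarith
      rw [hz0, hz1, hz2, hz3]; norm_num
    · obtain ⟨q, q0, q1, q2, q3⟩ : ∃ q : Fin 4 → ℝ, q 0 = Z 0 / 100 / c ∧
          q 1 = 9 * Z 1 / 100 / c ∧ q 2 = 9 * Z 2 / 100 / c ∧ q 3 = 81 * Z 3 / 100 / c :=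
        ⟨![Z 0 / 100 / c, 9 * Z 1 / 100 / c, 9 * Z 2 / 100 / c, 81 * Z 3 / 100 / c],
          rfl, rfl, rfl, rfl⟩
      have hcne : c ≠ 0 := ne_of_gt hcpos
      have hq : q ∈ Qlam := by
        rw [mem_Qlam_iff, q0, q1, q2, q3]
        refine ⟨?_, ?_, ?_, ?_, ?_, ?_⟩
        · intro i
          rcases fin4_cases i with h | h | h | h <;> subst h
          · rw [q0]; positivity
          · rw [q1]; positivity
          · rw [q2]; positivity
          · rw [q3]; positivity
        · field_simp
          linarith
        · rw [div_le_iff₀ hcpos]; nlinarith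
        · rw [div_le_iff₀ hcpos]; nlinarith
        · rw [div_le_iff₀ hcpos]; nlinarith
        · rw [div_le_iff₀ hcpos]; nlinarith
      have hle := mem_A0_elim hX hq
      rw [q0, q1, q2, q3] at hle
      have hmul := mul_le_mul_of_nonneg_left hle (le_of_lt hcpos)
      calc Z 0 * X 0 / 100 + 9 * (Z 1 * X 1) / 100 + 9 * (Z 2 * X 2) / 100
            + 81 * (Z 3 * X 3) / 100
          = c * (Z 0 / 100 / c * X 0 + 9 * Z 1 / 100 / c * X 1 + 9 * Z 2 / 100 / c * X 2
            + 81 * Z 3 / 100 / c * X 3) := by field_simp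
        _ ≤ c * 0 := hmul
        _ = 0 := by ring

-- auxiliary lemmas to insert above the theorem (after the given defs)
section Aux

instance : IsFiniteMeasure μ4 := by
  constructor
  simp [μ4]
  refine ⟨?_, ?_⟩ <;> exact ENNReal.div_lt_top (by norm_num) (by norm_num)

lemma mu4_singleton_toReal (i : Fin 4) : (μ4 {i}).toReal = pRef i := by
  have h : ∀ j : Fin 4, (Measure.dirac j {i}) = if i = j then 1 else 0 := by
    intro j
    rw [Measure.dirac_apply' _ (measurableSet_singleton i)]
    simp [Set.indicator_apply, eq_comm]
  simp only [μ4, Measure.coe_add, Pi.add_apply, Measure.smul_apply, smul_eq_mul, h]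
  fin_cases i <;> simp [pRef]

lemma integral_mu4_set (s : Finset (Fin 4)) (f : Fin 4 → ℝ) :
    ∫ x in (s : Set (Fin 4)), f x ∂μ4 = ∑ x ∈ s, pRef x * f x := by
  rw [setIntegral_finset s (Integrable.of_finite.integrableOn)]
  simp [measureReal_def, mu4_singleton_toReal]

lemma ae_mu4 {P : Fin 4 → Prop} (h : ∀ᵐ ω ∂μ4, P ω) (i : Fin 4) : P i := by
  by_contra hi
  have h1 : μ4 {ω | ¬ P ω} = 0 := h
  have h2 : μ4 {i} ≤ μ4 {ω | ¬ P ω} := measure_mono (by simpa using hi)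
  rw [h1, le_zero_iff] at h2
  have h3 := mu4_singleton_toReal i
  rw [h2] at h3
  fin_cases i <;> simp [pRef] at h3 <;> norm_num at h3

lemma F1m_pair {S : Set (Fin 4)} (hS : MeasurableSet[F1m] S) :
    ((0:Fin 4) ∈ S ↔ 1 ∈ S) ∧ ((2:Fin 4) ∈ S ↔ 3 ∈ S) := by
  refine MeasurableSpace.generateFrom_induction _
    (fun s _ => ((0:Fin 4) ∈ s ↔ 1 ∈ s) ∧ ((2:Fin 4) ∈ s ↔ 3 ∈ s)) ?_ ?_ ?_ ?_ S hS
  · rintro t ht _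
    simp only [Set.mem_singleton_iff] at ht
    subst ht; simp
  · simp
  · rintro t _ ⟨h1, h2⟩
    simp [h1, h2]
  · rintro s _ h
    constructor
    · simp only [Set.mem_iUnion]
      exact ⟨fun ⟨n, hn⟩ => ⟨n, (h n).1.mp hn⟩, fun ⟨n, hn⟩ => ⟨n, (h n).1.mpr hn⟩⟩
    · simp only [Set.mem_iUnion]
      exact ⟨fun ⟨n, hn⟩ => ⟨n, (h n).2.mp hn⟩, fun ⟨n, hn⟩ => ⟨n, (h n).2.mpr hn⟩⟩

lemma F4_zero : (ℱ4 0 : MeasurableSpace (Fin 4)) = ⊥ := rfl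
lemma F4_one : (ℱ4 1 : MeasurableSpace (Fin 4)) = F1m := rfl
lemma F4_ge2 (n : ℕ) : (ℱ4 (n+2) : MeasurableSpace (Fin 4)) = ⊤ := by
  show (if n + 2 = 0 then ⊥ else if n + 2 = 1 then F1m else ⊤) = ⊤
  simp

end Aux

/-- `A_0*` is `V`-m-stable: for every stopping time `τ ≤ 2` and
`Z, W ∈ A_0*·V` with `E[Z|F_τ] = α E[W|F_τ]` componentwise for some nonnegative
`F_τ`-measurable `α`, also `αW ∈ A_0*·V`. -/
theorem A0star_V_mstable :
    ∀ (τ : Fin 4 → ℕ) (hτ : IsStoppingTime ℱ4 (fun ω => (τ ω : WithTop ℕ))), (∀ ω, τ ω ≤ 2) →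
      ∀ Z ∈ A0starV, ∀ W ∈ A0starV, ∀ α : Fin 4 → ℝ,
        Measurable[hτ.measurableSpace] α → 0 ≤ᵐ[μ4] α →
        (∀ k, μ4[Z k | hτ.measurableSpace] =ᵐ[μ4]
          fun ω => α ω * (μ4[W k | hτ.measurableSpace]) ω) →
        (fun k ω => α ω * W k ω) ∈ A0starV := by
  intro τ hτ hτ2 Z hZ W hW α hαm hα0 hcond
  have hτ' : ∀ n : ℕ, MeasurableSet[ℱ4 n] {ω | τ ω ≤ n} := fun n => by
    have h := hτ n; simpa using h
  obtain ⟨z, hz, hZeq⟩ := hZ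
  obtain ⟨w, hw, hWeq⟩ := hW
  have hα : ∀ i, 0 ≤ α i := fun i => ae_mu4 hα0 i
  have hmem : (fun i => α i * w i) ∈ A0star := by
    rw [mem_A0star_iff] at hz hw ⊢
    refine ⟨fun i => mul_nonneg (hα i) (hw.1 i), ?_⟩
    by_cases h0 : τ 0 = 0
    · -- τ ≡ 0 on a set forcing α constant
      have hconst : ∀ i, α i = α 0 := by
        intro i
        have hS : MeasurableSet[hτ.measurableSpace] (α ⁻¹' {α 0}) :=
          hαm (measurableSet_singleton _)
        rw [IsStoppingTime.measurableSet] at hS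
        have h00 : MeasurableSet[ℱ4 0] (α ⁻¹' {α 0} ∩ {ω | τ ω ≤ 0}) := by
          simpa using hS.2 0
        have huniv : {ω : Fin 4 | τ ω ≤ 0} = Set.univ := by
          have hb := hτ' 0
          rw [F4_zero, MeasurableSpace.measurableSet_bot_iff] at hb
          rcases hb with h | h
          · exfalso
            have hmm : (0:Fin 4) ∈ {ω : Fin 4 | τ ω ≤ 0} := by simp [h0]
            rw [h] at hmm; exact hmm
          · exact h
        rw [huniv, Set.inter_univ, F4_zero, MeasurableSpace.measurableSet_bot_iff] at h00
        rcases h00 with h | h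
        · exfalso
          have hmm : (0:Fin 4) ∈ α ⁻¹' {α 0} := rfl
          rw [h] at hmm; exact hmm
        · have hmm : i ∈ α ⁻¹' {α 0} := h ▸ Set.mem_univ i
          exact hmm
      rw [hconst 1, hconst 2, hconst 3]
      nlinarith [mul_le_mul_of_nonneg_left hw.2 (hα 0)]
    · -- τ ≥ 1 everywhere
      have hge1 : ∀ ω, 1 ≤ τ ω := by
        intro ω
        by_contra hlt
        have hb := hτ' 0
        rw [F4_zero, MeasurableSpace.measurableSet_bot_iff] at hb
        rcases hb with h | h
        · have hmm : ω ∈ {ω : Fin 4 | τ ω ≤ 0} := by simp; omega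
          rw [h] at hmm; exact hmm
        · have hmm : (0:Fin 4) ∈ {ω : Fin 4 | τ ω ≤ 0} := h ▸ Set.mem_univ _
          exact h0 (Nat.le_zero.mp hmm)
      have ht0 : {ω : Fin 4 | τ ω ≤ 0} = ∅ := by
        ext ω; simp; have := hge1 ω; omega
      have hmle : hτ.measurableSpace ≤ (inferInstance : MeasurableSpace (Fin 4)) :=
        hτ.measurableSpace_le
      haveI : SigmaFinite (μ4.trim hmle) := inferInstance
      have hms : ∀ S : Set (Fin 4), MeasurableSet[F1m] (S ∩ {ω | τ ω ≤ 1}) →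
          MeasurableSet[hτ.measurableSpace] S := by
        intro S hS1
        rw [IsStoppingTime.measurableSet]
        refine ⟨(le_iSup (fun t => ℱ4 t) 2) S (by
          show MeasurableSet[ℱ4 (0+2)] S; rw [F4_ge2]; exact MeasurableSpace.measurableSet_top), ?_⟩
        intro n
        have e : {ω : Fin 4 | ((τ ω : WithTop ℕ)) ≤ WithTop.some n} = {ω | τ ω ≤ n} := by
          ext; simp
        simp only [e]
        match n with
        | 0 =>
          rw [ht0, Set.inter_empty]
          exact @MeasurableSet.empty _ (ℱ4 0)
        | 1 => exact hS1
        | (n+2) =>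
          rw [F4_ge2]
          exact MeasurableSpace.measurableSet_top
      have key : ∀ (s : Finset (Fin 4)), MeasurableSet[hτ.measurableSpace] (↑s : Set (Fin 4)) →
          ∀ k, ∑ i ∈ s, pRef i * (z i * V4 k i) = ∑ i ∈ s, pRef i * (α i * (w i * V4 k i)) := by
        intro s hs k
        have hpull : μ4[fun ω => α ω * W k ω|hτ.measurableSpace] =ᵐ[μ4]
            fun ω => α ω * (μ4[W k|hτ.measurableSpace]) ω := by
          have h := condExp_mul_of_stronglyMeasurable_left (μ := μ4) (m := hτ.measurableSpace)
            hαm.stronglyMeasurable (f := α) (g := W k) Integrable.of_finite Integrable.of_finite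
          exact h
        have hk : μ4[Z k|hτ.measurableSpace] =ᵐ[μ4] μ4[fun ω => α ω * W k ω|hτ.measurableSpace] :=
          (hcond k).trans hpull.symm
        have h1 : ∫ x in (↑s : Set (Fin 4)), Z k x ∂μ4
            = ∫ x in (↑s : Set (Fin 4)), α x * W k x ∂μ4 := by
          rw [← setIntegral_condExp hmle Integrable.of_finite hs,
              ← setIntegral_condExp hmle (f := fun ω => α ω * W k ω) Integrable.of_finite hs]
          exact integral_congr_ae (Filter.EventuallyEq.restrict hk)
        rw [integral_mu4_set, integral_mu4_set] at h1
        calc ∑ i ∈ s, pRef i * (z i * V4 k i) = ∑ i ∈ s, pRef i * Z k i :=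
              Finset.sum_congr rfl fun x _ => by rw [hZeq]
          _ = ∑ i ∈ s, pRef i * (α i * W k i) := h1
          _ = ∑ i ∈ s, pRef i * (α i * (w i * V4 k i)) :=
              Finset.sum_congr rfl fun x _ => by rw [hWeq]
      -- the pair facts
      have hτpair := F1m_pair (show MeasurableSet[F1m] {ω : Fin 4 | τ ω ≤ 1} from hτ' 1)
      have E01 : z 0 = α 0 * w 0 ∧ z 1 = α 1 * w 1 := by
        by_cases h1 : τ 0 ≤ 1
        · -- atom {0,1}, use both components
          have h1' : τ 1 ≤ 1 := hτpair.1.mp h1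
          have hmS : MeasurableSet[hτ.measurableSpace] (↑({0,1} : Finset (Fin 4)) : Set (Fin 4)) := by
            refine hms _ ?_
            have : (↑({0,1} : Finset (Fin 4)) : Set (Fin 4)) ∩ {ω | τ ω ≤ 1}
                = ({0,1} : Set (Fin 4)) := by
              ext ω
              simp only [Finset.coe_insert, Finset.coe_singleton, Set.mem_inter_iff,
                Set.mem_insert_iff, Set.mem_singleton_iff, Set.mem_setOf_eq]
              constructor
              · rintro ⟨h, -⟩; exact h
              · rintro (rfl | rfl) <;> exact ⟨by tauto, by assumption⟩
            rw [this]
            exact MeasurableSpace.measurableSet_generateFrom rfl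
          have k0 := key _ hmS 0
          have k1 := key _ hmS 1
          simp [Finset.sum_insert, pRef, V4] at k0 k1
          constructor <;> linarith
        · -- singletons {0} and {1}
          have h1' : ¬ τ 1 ≤ 1 := fun h => h1 (hτpair.1.mpr h)
          have hm0 : MeasurableSet[hτ.measurableSpace] (↑({0} : Finset (Fin 4)) : Set (Fin 4)) := by
            refine hms _ ?_
            have : (↑({0} : Finset (Fin 4)) : Set (Fin 4)) ∩ {ω | τ ω ≤ 1} = ∅ := by
              ext ω
              simp only [Finset.coe_singleton, Set.mem_inter_iff, Set.mem_singleton_iff,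
                Set.mem_setOf_eq, Set.mem_empty_iff_false, iff_false, not_and]
              rintro rfl; exact h1
            rw [this]
            exact @MeasurableSet.empty _ F1m
          have hm1 : MeasurableSet[hτ.measurableSpace] (↑({1} : Finset (Fin 4)) : Set (Fin 4)) := by
            refine hms _ ?_
            have : (↑({1} : Finset (Fin 4)) : Set (Fin 4)) ∩ {ω | τ ω ≤ 1} = ∅ := by
              ext ω
              simp only [Finset.coe_singleton, Set.mem_inter_iff, Set.mem_singleton_iff,
                Set.mem_setOf_eq, Set.mem_empty_iff_false, iff_false, not_and]
              rintro rfl; exact h1'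
            rw [this]
            exact @MeasurableSet.empty _ F1m
          have k0 := key _ hm0 0
          have k1 := key _ hm1 0
          simp [pRef, V4] at k0 k1
          constructor <;> linarith
      have E23 : 9 * z 2 + 81 * z 3 = 9 * (α 2 * w 2) + 81 * (α 3 * w 3) := by
        by_cases h1 : τ 2 ≤ 1
        · have h1' : τ 3 ≤ 1 := hτpair.2.mp h1
          have hmS : MeasurableSet[hτ.measurableSpace] (↑({2,3} : Finset (Fin 4)) : Set (Fin 4)) := by
            refine hms _ ?_
            have : (↑({2,3} : Finset (Fin 4)) : Set (Fin 4)) ∩ {ω | τ ω ≤ 1}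
                = ({2,3} : Set (Fin 4)) := by
              ext ω
              simp only [Finset.coe_insert, Finset.coe_singleton, Set.mem_inter_iff,
                Set.mem_insert_iff, Set.mem_singleton_iff, Set.mem_setOf_eq]
              constructor
              · rintro ⟨h, -⟩; exact h
              · rintro (rfl | rfl) <;> exact ⟨by tauto, by assumption⟩
            rw [this]
            have hcg : ({2,3} : Set (Fin 4)) = ({0,1} : Set (Fin 4))ᶜ := by
              ext ω; fin_cases ω <;> simp
            rw [hcg]
            exact (MeasurableSpace.measurableSet_generateFrom (Set.mem_singleton _)).compl
          have k0 := key _ hmS 0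
          simp [Finset.sum_insert, pRef, V4] at k0
          norm_num at k0
          linarith
        · have h1' : ¬ τ 3 ≤ 1 := fun h => h1 (hτpair.2.mpr h)
          have hm2 : MeasurableSet[hτ.measurableSpace] (↑({2} : Finset (Fin 4)) : Set (Fin 4)) := by
            refine hms _ ?_
            have : (↑({2} : Finset (Fin 4)) : Set (Fin 4)) ∩ {ω | τ ω ≤ 1} = ∅ := by
              ext ω
              simp only [Finset.coe_singleton, Set.mem_inter_iff, Set.mem_singleton_iff,
                Set.mem_setOf_eq, Set.mem_empty_iff_false, iff_false, not_and]
              rintro rfl; exact h1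
            rw [this]
            exact @MeasurableSet.empty _ F1m
          have hm3 : MeasurableSet[hτ.measurableSpace] (↑({3} : Finset (Fin 4)) : Set (Fin 4)) := by
            refine hms _ ?_
            have : (↑({3} : Finset (Fin 4)) : Set (Fin 4)) ∩ {ω | τ ω ≤ 1} = ∅ := by
              ext ω
              simp only [Finset.coe_singleton, Set.mem_inter_iff, Set.mem_singleton_iff,
                Set.mem_setOf_eq, Set.mem_empty_iff_false, iff_false, not_and]
              rintro rfl; exact h1'
            rw [this]
            exact @MeasurableSet.empty _ F1m
          have k2 := key _ hm2 0
          have k3 := key _ hm3 0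
          simp [pRef, V4] at k2 k3
          linarith
      obtain ⟨e0, e1⟩ := E01
      rw [e0] at hz
      linarith [hz.2]
  exact ⟨fun i => α i * w i, hmem, fun k i => by show α i * W k i = _; rw [hWeq]; ring⟩
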